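/- arXiv:2301.12386 — 11 statements merged into one kernel-verified Lean document; each statement's English description precedes it below -/
import Mathlib

section
/- Let h*(x) be any label maximizing y ↦ η(x)(y), and define the rejector r* by: r*(x) = 1 if and only if either μ(x) = 0, or μ(x) > 0 and (1 − c_in − c_out)·(1 − max_{y} η(x)(y)) + c_out·ν(x)/μ(x) > c_in. Then for every classifier h : X → Fin L and every rejector r : X → {0,1}, L_scod(h*, r*) ≤ L_scod(h, r); i.e., the pair (h*, r*) minimizes the SCOD risk. -/
open Finset

/-- The SCOD risk of a classifier `h` and rejector `r`:
`(1 − c_in − c_out)·Σ_x μ(x)·(1 − η(x)(h(x)))·1[r(x)=0] + c_in·Σ_x μ(x)·1[r(x)=1]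
  + c_out·Σ_x ν(x)·1[r(x)=0]`. -/
noncomputable def Lscod {X : Type*} [Fintype X] {L : ℕ}
    (μ : X → ℝ) (η : X → Fin L → ℝ) (ν : X → ℝ) (cin cout : ℝ)
    (h : X → Fin L) (r : X → Bool) : ℝ :=
  (1 - cin - cout) * ∑ x, μ x * (1 - η x (h x)) * (if r x = false then 1 else 0)
    + cin * ∑ x, μ x * (if r x = true then 1 else 0)
    + cout * ∑ x, ν x * (if r x = false then 1 else 0)

/-- Lemma 3.1, Bayes-optimality of the SCOD rule: if `h*` pointwise
maximizes `y ↦ η(x)(y)` and `r*(x) = 1` iff `μ(x) = 0`, or `μ(x) > 0` and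
`(1 − c_in − c_out)·(1 − max_y η(x)(y)) + c_out·ν(x)/μ(x) > c_in`, then `(h*, r*)`
minimizes the SCOD risk over all classifier–rejector pairs. -/
theorem scod_bayes_optimal
    {X : Type*} [Fintype X] [Nonempty X] {L : ℕ} (hL : 2 ≤ L)
    (μ : X → ℝ) (hμ0 : ∀ x, 0 ≤ μ x) (hμ1 : ∑ x, μ x = 1)
    (η : X → Fin L → ℝ) (hη0 : ∀ x y, 0 ≤ η x y) (hη1 : ∀ x, ∑ y, η x y = 1)
    (ν : X → ℝ) (hν0 : ∀ x, 0 ≤ ν x) (hν1 : ∑ x, ν x = 1)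
    (cin cout : ℝ) (hcin0 : 0 ≤ cin) (hcin1 : cin ≤ 1)
    (hcout0 : 0 ≤ cout) (hcout1 : cout ≤ 1) (hsum : cin + cout ≤ 1)
    (hstar : X → Fin L) (hhstar : ∀ x y, η x y ≤ η x (hstar x))
    (rstar : X → Bool)
    (hrstar : ∀ x, rstar x = true ↔
      (μ x = 0 ∨ (0 < μ x ∧
        (1 - cin - cout) * (1 - ⨆ y, η x y) + cout * (ν x / μ x) > cin))) :
    ∀ (h : X → Fin L) (r : X → Bool),
      Lscod μ η ν cin cout hstar rstar ≤ Lscod μ η ν cin cout h r := by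

  intro h r
  have hnL : Nonempty (Fin L) := ⟨⟨0, by omega⟩⟩
  rw [Lscod, Lscod, Finset.mul_sum, Finset.mul_sum, Finset.mul_sum, Finset.mul_sum,
    Finset.mul_sum, Finset.mul_sum, ← Finset.sum_add_distrib, ← Finset.sum_add_distrib,
    ← Finset.sum_add_distrib, ← Finset.sum_add_distrib]
  apply Finset.sum_le_sum
  intro x _
  have ha : 0 ≤ 1 - cin - cout := by linarith
  have hM1 : η x (hstar x) ≤ 1 := by
    rw [← hη1 x]
    exact Finset.single_le_sum (fun y _ => hη0 x y) (Finset.mem_univ _)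
  have hh1 : η x (h x) ≤ 1 := le_trans (hhstar x (h x)) hM1
  have hsup : (⨆ y, η x y) = η x (hstar x) :=
    le_antisymm (ciSup_le (hhstar x))
      (le_ciSup (Set.Finite.bddAbove (Set.finite_range _)) (hstar x))
  have hr' := hrstar x
  rw [hsup] at hr'
  by_cases hμx : μ x = 0
  · have hrs : rstar x = true := hr'.mpr (Or.inl hμx)
    rw [hrs]
    cases hrx : r x <;> simp [hμx] <;>
      nlinarith [mul_nonneg (mul_nonneg (hμ0 x) (by linarith : (0:ℝ) ≤ 1 - η x (h x))) ha,
        hν0 x, hcin0, hcout0, mul_nonneg hcout0 (hν0 x)]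
  · have hμpos : 0 < μ x := lt_of_le_of_ne (hμ0 x) (Ne.symm hμx)
    have ht : ν x / μ x * μ x = ν x := div_mul_cancel₀ _ hμx
    have hkey : (1 - cin - cout) * (μ x * (1 - η x (hstar x)))
        ≤ (1 - cin - cout) * (μ x * (1 - η x (h x))) := by
      nlinarith [mul_le_mul_of_nonneg_left (hhstar x (h x)) (mul_nonneg ha (hμ0 x))]
    by_cases hC : (1 - cin - cout) * (1 - η x (hstar x)) + cout * (ν x / μ x) > cin
    · have hrs : rstar x = true := hr'.mpr (Or.inr ⟨hμpos, hC⟩)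
      rw [hrs]
      cases hrx : r x <;> simp
      nlinarith [mul_lt_mul_of_pos_right hC hμpos, ht, hkey]
    · have hrs : rstar x = false := by
        rw [← Bool.not_eq_true, hr']
        push_neg
        exact ⟨hμx, fun _ => le_of_not_gt hC⟩
      rw [hrs]
      cases hrx : r x <;> simp
      · linarith [hkey]
      · nlinarith [mul_le_mul_of_nonneg_right (le_of_not_gt hC) hμpos.le, ht]
end

section
/- Suppose the pair (h, r) minimizes L_scod over all classifier–rejector pairs. Then for every x ∈ X with μ(x) > 0: (i) if (1 − c_in − c_out)·(1 − max_y η(x)(y)) + c_out·ν(x)/μ(x) > c_in then r(x) = 1; (ii) if (1 − c_in − c_out)·(1 − max_y η(x)(y)) + c_out·ν(x)/μ(x) < c_in then r(x) = 0; (iii) if r(x) = 0 and c_in + c_out < 1 then η(x)(h(x)) = max_y η(x)(y). Moreover, for every x with μ(x) = 0, ν(x) > 0 and c_out > 0, r(x) = 1. -/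
open Finset

/-- necessary conditions satisfied by any minimizer `(h, r)` of the
SCOD risk. For every `x` with `μ(x) > 0`: (i) if the Bayes rejection score exceeds
`c_in` then `r(x) = 1`; (ii) if it is below `c_in` then `r(x) = 0`; (iii) on accepted
points (when `c_in + c_out < 1`) `h` predicts an argmax of `η(x)`. Moreover `r` rejects
any `x` with `μ(x) = 0`, `ν(x) > 0` and `c_out > 0`. -/
theorem scod_minimizer_necessary_conditions
    {X : Type*} [Fintype X] [Nonempty X] {L : ℕ} (hL : 2 ≤ L)
    (μ : X → ℝ) (hμ0 : ∀ x, 0 ≤ μ x) (hμ1 : ∑ x, μ x = 1)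
    (η : X → Fin L → ℝ) (hη0 : ∀ x y, 0 ≤ η x y) (hη1 : ∀ x, ∑ y, η x y = 1)
    (ν : X → ℝ) (hν0 : ∀ x, 0 ≤ ν x) (hν1 : ∑ x, ν x = 1)
    (cin cout : ℝ) (hcin0 : 0 ≤ cin) (hcin1 : cin ≤ 1)
    (hcout0 : 0 ≤ cout) (hcout1 : cout ≤ 1) (hsum : cin + cout ≤ 1)
    (h : X → Fin L) (r : X → Bool)
    (hmin : ∀ (h' : X → Fin L) (r' : X → Bool),
      Lscod μ η ν cin cout h r ≤ Lscod μ η ν cin cout h' r') :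
    (∀ x, 0 < μ x →
      ((1 - cin - cout) * (1 - ⨆ y, η x y) + cout * (ν x / μ x) > cin → r x = true)
      ∧ ((1 - cin - cout) * (1 - ⨆ y, η x y) + cout * (ν x / μ x) < cin → r x = false)
      ∧ (r x = false → cin + cout < 1 → η x (h x) = ⨆ y, η x y))
    ∧ (∀ x, μ x = 0 → 0 < ν x → 0 < cout → r x = true) := by
  classical
  haveI : NeZero L := ⟨by omega⟩
  set F : X → Fin L → Bool → ℝ := fun x a b =>
    (1 - cin - cout) * (μ x * (1 - η x a) * (if b = false then 1 else 0))
      + cin * (μ x * (if b = true then 1 else 0))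
      + cout * (ν x * (if b = false then 1 else 0)) with hF
  have hLs : ∀ (h' : X → Fin L) (r' : X → Bool),
      Lscod μ η ν cin cout h' r' = ∑ x, F x (h' x) (r' x) := by
    intro h' r'
    simp only [Lscod, hF, Finset.mul_sum, Finset.sum_add_distrib]
  have key : ∀ (x0 : X) (a : Fin L) (b : Bool),
      F x0 (h x0) (r x0) ≤ F x0 a b := by
    intro x0 a b
    have hm := hmin (Function.update h x0 a) (Function.update r x0 b)
    rw [hLs, hLs] at hm
    rw [← Finset.add_sum_erase _ _ (Finset.mem_univ x0),
        ← Finset.add_sum_erase _ (fun x => F x (Function.update h x0 a x)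
          (Function.update r x0 b x)) (Finset.mem_univ x0)] at hm
    have hrest : ∑ x ∈ univ.erase x0, F x (Function.update h x0 a x)
        (Function.update r x0 b x) = ∑ x ∈ univ.erase x0, F x (h x) (r x) := by
      refine Finset.sum_congr rfl fun x hx => ?_
      rw [Function.update_of_ne (Finset.ne_of_mem_erase hx),
          Function.update_of_ne (Finset.ne_of_mem_erase hx)]
    rw [hrest, Function.update_self, Function.update_self] at hm
    linarith
  have hbdd : ∀ x : X, BddAbove (Set.range (η x)) :=
    fun x => (Set.finite_range (η x)).bddAbove
  have hsupat : ∀ x : X, ∃ y0 : Fin L, η x y0 = ⨆ y, η x y := by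
    intro x
    exact exists_eq_ciSup_of_finite
  constructor
  · intro x hμx
    obtain ⟨y0, hy0⟩ := hsupat x
    have hle : η x (h x) ≤ ⨆ y, η x y := le_ciSup (hbdd x) (h x)
    have hνμ : cout * (ν x / μ x) * μ x = cout * ν x := by
      field_simp
    refine ⟨?_, ?_, ?_⟩
    · intro hgt
      cases hr : r x with
      | true => rfl
      | false =>
        exfalso
        have k := key x y0 true
        simp only [hF, hr] at k
        norm_num at k
        -- k : (1-cin-cout)*(μ x*(1-η x (h x))) + cout*ν x ≤ cin*μ x
        have h1 : (1 - cin - cout) * (1 - ⨆ y, η x y) * μ x + cout * ν x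
            > cin * μ x := by
          have := mul_lt_mul_of_pos_right hgt hμx
          nlinarith [hνμ]
        have h2 : (1 - cin - cout) * (μ x * (1 - η x (h x)))
            ≥ (1 - cin - cout) * (1 - ⨆ y, η x y) * μ x := by
          nlinarith [mul_nonneg (mul_nonneg (show (0:ℝ) ≤ 1 - cin - cout by linarith)
            hμx.le) (sub_nonneg.mpr hle)]
        linarith
    · intro hlt
      cases hr : r x with
      | false => rfl
      | true =>
        exfalso
        have k := key x y0 false
        simp only [hF, hr] at k
        norm_num at k
        -- k : cin * μ x ≤ (1-cin-cout)*(μ x*(1-η x y0)) + cout*ν x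
        have h1 : (1 - cin - cout) * (1 - ⨆ y, η x y) * μ x + cout * ν x
            < cin * μ x := by
          have := mul_lt_mul_of_pos_right hlt hμx
          nlinarith [hνμ]
        rw [hy0] at k
        nlinarith
    · intro hr hc1
      have k := key x y0 false
      simp only [hF, hr] at k
      norm_num at k
      rw [hy0] at k
      have hpos : 0 < 1 - cin - cout := by linarith
      have : μ x * (1 - η x (h x)) ≤ μ x * (1 - ⨆ y, η x y) := by
        nlinarith
      have : 1 - η x (h x) ≤ 1 - ⨆ y, η x y := by
        nlinarith
      linarith
  · intro x hμx hνx hcout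
    cases hr : r x with
    | true => rfl
    | false =>
      exfalso
      have k := key x (h x) true
      simp only [hF, hr] at k
      norm_num at k
      rw [hμx] at k
      nlinarith
end

section
/- Suppose c_out = 0 and 0 ≤ c_in < 1. Let h*(x) be any label maximizing y ↦ η(x)(y), and define Chow's rejector r*(x) = 1 if and only if 1 − max_y η(x)(y) > c_in/(1 − c_in). Then for every classifier h and rejector r, L_scod(h*, r*) ≤ L_scod(h, r). -/
open Finset

/-- special case: selective classification / Chow's rule:
when `c_out = 0` and `0 ≤ c_in < 1`, the classifier `h*` predicting an argmax of
`η(x)` together with Chow's rejector, `r*(x) = 1` iff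
`1 − max_y η(x)(y) > c_in/(1 − c_in)`, minimizes the SCOD risk. -/
theorem scod_chow_rule_optimal
    {X : Type*} [Fintype X] [Nonempty X] {L : ℕ} (hL : 2 ≤ L)
    (μ : X → ℝ) (hμ0 : ∀ x, 0 ≤ μ x) (hμ1 : ∑ x, μ x = 1)
    (η : X → Fin L → ℝ) (hη0 : ∀ x y, 0 ≤ η x y) (hη1 : ∀ x, ∑ y, η x y = 1)
    (ν : X → ℝ) (hν0 : ∀ x, 0 ≤ ν x) (hν1 : ∑ x, ν x = 1)
    (cin : ℝ) (hcin0 : 0 ≤ cin) (hcin1 : cin < 1)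
    (hstar : X → Fin L) (hhstar : ∀ x y, η x y ≤ η x (hstar x))
    (rstar : X → Bool)
    (hrstar : ∀ x, rstar x = true ↔ 1 - (⨆ y, η x y) > cin / (1 - cin)) :
    ∀ (h : X → Fin L) (r : X → Bool),
      Lscod μ η ν cin 0 hstar rstar ≤ Lscod μ η ν cin 0 h r := by
  intro h r
  classical
  have hcpos : 0 < 1 - cin := by linarith
  haveI : Nonempty (Fin L) := ⟨⟨0, by omega⟩⟩
  have hM : ∀ x, (⨆ y, η x y) = η x (hstar x) := fun x =>
    le_antisymm (ciSup_le (hhstar x)) (le_ciSup (Set.finite_range _).bddAbove _)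
  have expand : ∀ (h' : X → Fin L) (r' : X → Bool), Lscod μ η ν cin 0 h' r' =
      ∑ x, ((1 - cin) * (μ x * (1 - η x (h' x)) * (if r' x = false then 1 else 0))
        + cin * (μ x * (if r' x = true then 1 else 0))) := by
    intro h' r'
    simp [Lscod, mul_sum, sum_add_distrib]
  rw [expand, expand]
  refine sum_le_sum fun x _ => ?_
  have hle : 1 - η x (hstar x) ≤ 1 - η x (h x) := by linarith [hhstar x (h x)]
  have hμx := hμ0 x
  rcases Bool.eq_false_or_eq_true (rstar x) with hs | hs <;>
    rcases Bool.eq_false_or_eq_true (r x) with hr | hr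
  · -- rstar true, r true: equal
    simp [hs, hr]
  · -- rstar true, r false
    have hch : cin / (1 - cin) < 1 - η x (hstar x) := by
      have := (hrstar x).mp hs
      rwa [hM x] at this
    have h1 : cin ≤ (1 - cin) * (1 - η x (hstar x)) := by
      have := (div_lt_iff₀ hcpos).mp hch
      linarith
    have h2 : (1 - cin) * (1 - η x (hstar x)) ≤ (1 - cin) * (1 - η x (h x)) :=
      mul_le_mul_of_nonneg_left hle (le_of_lt hcpos)
    simp [hs, hr]
    nlinarith [mul_le_mul_of_nonneg_right h1 hμx, mul_le_mul_of_nonneg_right h2 hμx]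
  · -- rstar false, r true
    have hch : 1 - η x (hstar x) ≤ cin / (1 - cin) := by
      have h0 : ¬ (1 - (⨆ y, η x y) > cin / (1 - cin)) := fun hgt => by
        simp [(hrstar x).mpr hgt] at hs
      rw [hM x] at h0
      exact not_lt.mp h0
    have h1 : (1 - cin) * (1 - η x (hstar x)) ≤ cin := by
      have := (le_div_iff₀ hcpos).mp hch
      linarith
    simp [hs, hr]
    nlinarith [mul_le_mul_of_nonneg_right h1 hμx]
  · -- both false: monotone in misclassification
    simp only [hs, hr, ite_true, ite_false]
    have : μ x * (1 - η x (hstar x)) ≤ μ x * (1 - η x (h x)) :=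
      mul_le_mul_of_nonneg_left hle hμx
    nlinarith
end

section
/- Suppose c_in + c_out = 1 and 0 ≤ c_in < 1 (so c_out = 1 − c_in > 0). Define the density-based rejector r*(x) = 1 if and only if c_out·ν(x) > c_in·μ(x) (equivalently, for μ(x) > 0, ν(x)/μ(x) > c_in/(1 − c_in)). Then for every classifier h' and every classifier h and rejector r, L_scod(h', r*) ≤ L_scod(h, r); in particular r* minimizes r ↦ c_in·Σ_x μ(x)·1[r(x)=1] + c_out·Σ_x ν(x)·1[r(x)=0] over all rejectors. -/
open Finset

/-- special case: OOD detection / density-based rejection: when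
`c_in + c_out = 1` and `0 ≤ c_in < 1`, the density-based rejector
`r*(x) = 1 ↔ c_out·ν(x) > c_in·μ(x)` is optimal: for every classifier `h'`, the pair
`(h', r*)` minimizes the SCOD risk over all pairs `(h, r)`; in particular `r*`
minimizes `r ↦ c_in·Σ_x μ(x)·1[r(x)=1] + c_out·Σ_x ν(x)·1[r(x)=0]`. -/
theorem scod_density_rejection_optimal
    {X : Type*} [Fintype X] [Nonempty X] {L : ℕ} (hL : 2 ≤ L)
    (μ : X → ℝ) (hμ0 : ∀ x, 0 ≤ μ x) (hμ1 : ∑ x, μ x = 1)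
    (η : X → Fin L → ℝ) (hη0 : ∀ x y, 0 ≤ η x y) (hη1 : ∀ x, ∑ y, η x y = 1)
    (ν : X → ℝ) (hν0 : ∀ x, 0 ≤ ν x) (hν1 : ∑ x, ν x = 1)
    (cin cout : ℝ) (hcin0 : 0 ≤ cin) (hcin1 : cin < 1) (hsum : cin + cout = 1)
    (rstar : X → Bool)
    (hrstar : ∀ x, rstar x = true ↔ cout * ν x > cin * μ x) :
    (∀ (h' : X → Fin L) (h : X → Fin L) (r : X → Bool),
      Lscod μ η ν cin cout h' rstar ≤ Lscod μ η ν cin cout h r)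
    ∧ (∀ r : X → Bool,
        cin * ∑ x, μ x * (if rstar x = true then 1 else 0)
          + cout * ∑ x, ν x * (if rstar x = false then 1 else 0)
        ≤ cin * ∑ x, μ x * (if r x = true then 1 else 0)
          + cout * ∑ x, ν x * (if r x = false then 1 else 0)) := by
  have key : ∀ r : X → Bool,
      cin * ∑ x, μ x * (if rstar x = true then 1 else 0)
        + cout * ∑ x, ν x * (if rstar x = false then 1 else 0)
      ≤ cin * ∑ x, μ x * (if r x = true then 1 else 0)
        + cout * ∑ x, ν x * (if r x = false then 1 else 0) := by
    intro r
    have hform : ∀ s : X → Bool,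
        cin * ∑ x, μ x * (if s x = true then 1 else 0)
          + cout * ∑ x, ν x * (if s x = false then 1 else 0)
        = ∑ x, (if s x = true then cin * μ x else cout * ν x) := by
      intro s
      rw [Finset.mul_sum, Finset.mul_sum, ← Finset.sum_add_distrib]
      apply Finset.sum_congr rfl
      intro x _
      cases hs : s x <;> simp [hs] <;> ring
    rw [hform, hform]
    apply Finset.sum_le_sum
    intro x _
    by_cases hst : rstar x = true
    · have := (hrstar x).mp hst
      cases hr : r x <;> simp [hst, hr] <;> linarith
    · have h2 : ¬ (cout * ν x > cin * μ x) := fun hc => hst ((hrstar x).mpr hc)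
      push_neg at h2
      simp only [Bool.not_eq_true] at hst
      cases hr : r x <;> simp [hst, hr] <;> linarith
  refine ⟨?_, key⟩
  intro h' h r
  have hz : (1 : ℝ) - cin - cout = 0 := by linarith
  simp only [Lscod, hz, zero_mul, zero_add]
  exact key r
end

section
/- Let c_in ≥ 0 and c_out > 0. For every x ∈ X with P(x) > 0, the density comparison c_in·μ(x) < c_out·ν(x) holds if and only if P(⊥ | x) > F(c_in·π_L/(c_out·(1 − π_L))), where F(z) = z/(1 + z). -/
open Finset

/-- Lemma 3.2, first part: in the open-set setting with unseen class
`⊥ = L − 1`, inlier density `μ(x) = (Σ_{y ≠ ⊥} P(x)(y))/(1 − π_L)` and outlier density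
`ν(x) = P(x)(⊥)/π_L`, for any `x` with positive marginal `P(x) = Σ_y P(x)(y)`,
`c_in·μ(x) < c_out·ν(x)` holds iff
`P(⊥ | x) > F(c_in·π_L/(c_out·(1 − π_L)))` where `F(z) = z/(1 + z)`. -/
theorem open_set_density_threshold
    {X : Type*} [Fintype X] [Nonempty X] {L : ℕ} (hL : 2 ≤ L)
    (P : X → Fin L → ℝ) (hP0 : ∀ x y, 0 ≤ P x y) (hP1 : ∑ x, ∑ y, P x y = 1)
    (bot : Fin L) (hbot : (bot : ℕ) = L - 1)
    (πL : ℝ) (hπ : πL = ∑ x, P x bot) (hπ0 : 0 < πL) (hπ1 : πL < 1)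
    (cin cout : ℝ) (hcin : 0 ≤ cin) (hcout : 0 < cout)
    (x : X) (hx : 0 < ∑ y, P x y) :
    cin * ((∑ y ∈ Finset.univ.filter (· ≠ bot), P x y) / (1 - πL))
        < cout * (P x bot / πL)
    ↔ P x bot / (∑ y, P x y)
        > (cin * πL / (cout * (1 - πL))) / (1 + cin * πL / (cout * (1 - πL))) := by
  have h1π : 0 < 1 - πL := by linarith
  have hcz : 0 < cout * (1 - πL) := by positivity
  set S : ℝ := ∑ y ∈ Finset.univ.filter (· ≠ bot), P x y with hS
  set b : ℝ := P x bot with hb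
  have hT : ∑ y, P x y = S + b := by
    rw [hS, hb, ← Finset.sum_filter_add_sum_filter_not Finset.univ (· ≠ bot) (P x)]
    congr 1
    have : Finset.univ.filter (fun y => ¬ y ≠ bot) = {bot} := by
      ext y; simp
    rw [this, Finset.sum_singleton]
  have hS0 : 0 ≤ S := Finset.sum_nonneg fun y _ => hP0 x y
  have hb0 : 0 ≤ b := hP0 x bot
  rw [hT] at hx ⊢
  set z : ℝ := cin * πL / (cout * (1 - πL)) with hz
  have hz0 : 0 ≤ z := by positivity
  have h1z : 0 < 1 + z := by linarith
  have hiff : z * S < b ↔ cin * S * πL < cout * b * (1 - πL) := by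
    rw [hz, div_mul_eq_mul_div, div_lt_iff₀ hcz]
    constructor <;> intro h <;> nlinarith [h]
  rw [mul_div_assoc', mul_div_assoc', div_lt_div_iff₀ h1π hπ0, gt_iff_lt,
    div_lt_div_iff₀ h1z hx, ← hiff]
  constructor <;> intro h <;> nlinarith [h]
end

section
/- Let L ≥ 2 and write ⊥ = L−1. For every t_msp ∈ (0,1) and every t_osc ∈ (0,1), there exists a probability vector q : Fin L → ℝ≥0 (Σ_y q(y) = 1) with q(⊥) < 1 such that the Bayes-optimal open-set rejection decision disagrees with the MSP rejection decision: exactly one of the conditions [q(⊥) > t_osc] and [max_{y ≠ ⊥} q(y)/(1 − q(⊥)) < t_msp] holds. -/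
open Finset

/-! Put mass `c ∈ (t_osc, 1)` on `⊥` and the remaining mass `1 - c` on a single inlier class.
The Bayes rule rejects, since `q(⊥) = c > t_osc`, while the renormalised inlier distribution is
a point mass, so its MSP score is `1 ≥ t_msp` and MSP accepts. -/

section TwoPoint

variable {ι : Type*} [DecidableEq ι]

def twoPoint (a b : ι) (c : ℝ) : ι → ℝ :=
  Pi.single a c + Pi.single b (1 - c)

variable {a b : ι} {c : ℝ}

lemma twoPoint_nonneg (hc0 : 0 ≤ c) (hc1 : c ≤ 1) : 0 ≤ twoPoint a b c :=
  add_nonneg (Pi.single_nonneg.mpr hc0) (Pi.single_nonneg.mpr (sub_nonneg.mpr hc1))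

lemma sum_twoPoint [Fintype ι] : ∑ y, twoPoint a b c y = 1 := by
  simp [twoPoint, sum_add_distrib]

lemma twoPoint_apply_left (hab : a ≠ b) : twoPoint a b c a = c := by
  simp [twoPoint, hab]

lemma twoPoint_apply_of_ne_left {y : ι} (hy : y ≠ a) :
    twoPoint a b c y = Pi.single (M := fun _ => ℝ) b (1 - c) y := by
  simp [twoPoint, hy]

lemma sup'_erase_twoPoint [Fintype ι] (hc1 : c ≤ 1) (hb : b ∈ univ.erase a)
    (hne : (univ.erase a).Nonempty) : (univ.erase a).sup' hne (twoPoint a b c) = 1 - c := by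
  apply le_antisymm
  · refine sup'_le _ _ fun y hy => ?_
    rw [twoPoint_apply_of_ne_left (ne_of_mem_erase hy), Pi.single_apply]
    split_ifs <;> linarith
  · calc 1 - c = twoPoint a b c b := by
          rw [twoPoint_apply_of_ne_left (ne_of_mem_erase hb), Pi.single_eq_same]
      _ ≤ _ := le_sup' _ hb

end TwoPoint

theorem msp_disagrees_with_bayes_open_set_general
    {L : ℕ} (bot : Fin L)
    (hne : (Finset.univ.erase bot).Nonempty)
    (tmsp tosc : ℝ) (htmsp1 : tmsp < 1)
    (htosc0 : 0 < tosc) (htosc1 : tosc < 1) :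
    ∃ q : Fin L → ℝ, (∀ y, 0 ≤ q y) ∧ (∑ y, q y = 1) ∧ q bot < 1 ∧
      Xor' (q bot > tosc)
        ((Finset.univ.erase bot).sup' hne q / (1 - q bot) < tmsp) := by
  obtain ⟨y₀, hy₀⟩ := id hne
  obtain ⟨c, hc_gt, hc_lt⟩ := exists_between htosc1
  have hq_bot : twoPoint bot y₀ c bot = c := twoPoint_apply_left (ne_of_mem_erase hy₀).symm
  have hmsp : (univ.erase bot).sup' hne (twoPoint bot y₀ c) / (1 - c) = 1 := by
    rw [sup'_erase_twoPoint hc_lt.le hy₀, div_self (sub_ne_zero.mpr hc_lt.ne')]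
  refine ⟨twoPoint bot y₀ c, twoPoint_nonneg (htosc0.trans hc_gt).le hc_lt.le, sum_twoPoint,
    ?_, Or.inl ⟨?_, ?_⟩⟩ <;> rw [hq_bot]
  · exact hc_lt
  · exact hc_gt
  · rw [hmsp]
    exact htmsp1.not_gt

/-- Lemma 3.4, failure of the MSP baseline: for every MSP threshold
`t_msp ∈ (0,1)` and Bayes threshold `t_osc ∈ (0,1)`, there is a probability vector `q`
on `Fin L` (with unseen class `⊥ = L − 1` and `q(⊥) < 1`) on which the Bayes-optimal
open-set rejection decision `q(⊥) > t_osc` disagrees with the MSP rejection decision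
`max_{y ≠ ⊥} q(y)/(1 − q(⊥)) < t_msp`: exactly one of the two holds. -/
theorem msp_disagrees_with_bayes_open_set
    {L : ℕ} (hL : 2 ≤ L) (bot : Fin L) (hbot : (bot : ℕ) = L - 1)
    (hne : (Finset.univ.erase bot).Nonempty)
    (tmsp tosc : ℝ) (htmsp0 : 0 < tmsp) (htmsp1 : tmsp < 1)
    (htosc0 : 0 < tosc) (htosc1 : tosc < 1) :
    ∃ q : Fin L → ℝ, (∀ y, 0 ≤ q y) ∧ (∑ y, q y = 1) ∧ q bot < 1 ∧
      Xor' (q bot > tosc)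
        ((Finset.univ.erase bot).sup' hne q / (1 - q bot) < tmsp) :=
  msp_disagrees_with_bayes_open_set_general bot hne tmsp tosc htmsp1 htosc0 htosc1
end

section
/- Let c_in, c_out ∈ [0,1] with c_in + c_out ≤ 1, let m ∈ [0,1], and let p > 0 and q > 0 be real numbers. Set s_sc = m, s_ood = p/q, ϑ(z) = −1/z, and t_BB = 1 − 2·c_in − c_out. Then the black-box rejection condition (1 − c_in − c_out)·s_sc + c_out·ϑ(s_ood) < t_BB holds if and only if the Bayes-optimal rejection condition (1 − c_in − c_out)·(1 − m) + c_out·(q/p) > c_in holds. -/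
/-- with `s_sc = m`, `s_ood = p/q`, `ϑ(z) = −1/z` and
`t_BB = 1 − 2·c_in − c_out`, the black-box rejection condition
`(1 − c_in − c_out)·s_sc + c_out·ϑ(s_ood) < t_BB` holds iff the Bayes-optimal
rejection condition `(1 − c_in − c_out)·(1 − m) + c_out·(q/p) > c_in` holds. -/
theorem blackbox_rejector_matches_bayes
    (cin cout : ℝ) (hcin0 : 0 ≤ cin) (hcin1 : cin ≤ 1)
    (hcout0 : 0 ≤ cout) (hcout1 : cout ≤ 1) (hsum : cin + cout ≤ 1)
    (m : ℝ) (hm0 : 0 ≤ m) (hm1 : m ≤ 1)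
    (p q : ℝ) (hp : 0 < p) (hq : 0 < q) :
    (1 - cin - cout) * m + cout * (-(1 / (p / q))) < 1 - 2 * cin - cout
    ↔ (1 - cin - cout) * (1 - m) + cout * (q / p) > cin := by
  rw [one_div_div]
  constructor <;> intro h <;> nlinarith [h]
end

section
/- Suppose μ(x) + ν(x) > 0 for all x, and set γ(x) = μ(x)/(μ(x) + ν(x)) and P*(x) = (μ(x) + ν(x))/2. Let η̂ : X → Fin L → ℝ≥0 with Σ_y η̂(x)(y) = 1 be estimated class probabilities, let ŝ : X → ℝ with ŝ(x) > 0 be an estimated density ratio, let ĥ(x) be any label maximizing y ↦ η̂(x)(y), and let r̂(x) = 1 if and only if (1 − c_in − c_out)·(1 − max_y η̂(x)(y)) + c_out/ŝ(x) > c_in. Then L_scod(ĥ, r̂) − min_{h,r} L_scod(h, r) ≤ 4·Σ_x P*(x)·( Σ_y |η(x)(y) − η̂(x)(y)| + |γ(x) − ŝ(x)/(1 + ŝ(x))| ). -/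
/-!
Write `S = μ + ν` and `σ = ŝ / (1 + ŝ)`. At each point the plug-in pair `(ĥ, r̂)` is exactly the
Bayes-optimal choice for the SCOD loss in which `μ, ν, η` are replaced by the estimates
`σ S, (1 - σ) S, η̂`: multiplying the rejection rule by `σ S` turns `c_out / ŝ` into
`c_out (1 - σ) S`. For every choice of label and rejection the true and the estimated pointwise
losses differ by at most `S (|γ - σ| + Σ_y |η_y - η̂_y|)`, and minimising a cost that is uniformly
`ε`-close to the true one loses at most `2ε` against any competitor.
-/

open Finset

def scodPointLoss {L : ℕ} (cin cout m n : ℝ) (p : Fin L → ℝ) (y : Fin L) (b : Bool) : ℝ :=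
  if b then cin * m else (1 - cin - cout) * (m * (1 - p y)) + cout * n

theorem Lscod_eq_sum_scodPointLoss {X : Type*} [Fintype X] {L : ℕ}
    (μ : X → ℝ) (η : X → Fin L → ℝ) (ν : X → ℝ) (cin cout : ℝ)
    (h : X → Fin L) (r : X → Bool) :
    Lscod μ η ν cin cout h r = ∑ x, scodPointLoss cin cout (μ x) (ν x) (η x) (h x) (r x) := by
  simp only [Lscod, mul_sum, ← sum_add_distrib]
  refine sum_congr rfl fun x _ => ?_
  cases r x <;> simp [scodPointLoss]

theorem sub_le_two_mul_of_isMin_of_abs_sub_le {ι : Type*} {c ĉ : ι → ℝ} {ε : ℝ}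
    (hε : ∀ k, |c k - ĉ k| ≤ ε) {i : ι} (hi : ∀ j, ĉ i ≤ ĉ j) (j : ι) :
    c i - c j ≤ 2 * ε := by
  have := (abs_le.mp (hε i)).2
  have := (abs_le.mp (hε j)).1
  linarith [hi j]

section PointLoss

variable {L : ℕ} {cin cout : ℝ}

theorem scodPointLoss_le_of_plugin {m n : ℝ} {p : Fin L → ℝ} {yh : Fin L} {b : Bool}
    (hc : 0 ≤ 1 - cin - cout) (hm : 0 ≤ m) (hyh : ∀ y, p y ≤ p yh)
    (hb : b = true ↔ cin * m < (1 - cin - cout) * (m * (1 - p yh)) + cout * n)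
    (y : Fin L) (b' : Bool) :
    scodPointLoss cin cout m n p yh b ≤ scodPointLoss cin cout m n p y b' := by
  have haccept : (1 - cin - cout) * (m * (1 - p yh)) + cout * n
      ≤ (1 - cin - cout) * (m * (1 - p y)) + cout * n := by
    gcongr
    exact hyh y
  cases b <;> cases b' <;> simp only [scodPointLoss, Bool.false_eq_true, if_false, if_true] at hb ⊢
  · exact haccept
  · exact not_lt.mp hb.mpr
  · exact (hb.mp trivial).le.trans haccept
  · exact le_rfl

theorem abs_scodPointLoss_sub_le {m n m' n' : ℝ} {p p' : Fin L → ℝ} {y : Fin L}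
    (hcin : 0 ≤ cin) (hcout : 0 ≤ cout) (hsum : cin + cout ≤ 1)
    (hp0 : 0 ≤ p y) (hp1 : p y ≤ 1) (hm' : 0 ≤ m') (hmn : m + n = m' + n') (b : Bool) :
    |scodPointLoss cin cout m n p y b - scodPointLoss cin cout m' n' p' y b|
      ≤ |m - m'| + m' * |p y - p' y| := by
  have hc : 0 ≤ 1 - cin - cout := by linarith
  cases b
  · have hsplit : scodPointLoss cin cout m n p y false - scodPointLoss cin cout m' n' p' y false
        = (1 - cin - cout) * ((m - m') * (1 - p y)) + (1 - cin - cout) * (m' * (p' y - p y))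
          + cout * (m' - m) := by
      simp only [scodPointLoss, Bool.false_eq_true, if_false]
      linear_combination cout * hmn
    have hfirst : |(1 - cin - cout) * ((m - m') * (1 - p y))| ≤ (1 - cin - cout) * |m - m'| := by
      rw [abs_mul, abs_mul, abs_of_nonneg hc, abs_of_nonneg (sub_nonneg.2 hp1)]
      exact mul_le_mul_of_nonneg_left (mul_le_of_le_one_right (abs_nonneg _) (by linarith)) hc
    have hsecond : |(1 - cin - cout) * (m' * (p' y - p y))| ≤ m' * |p y - p' y| := by
      rw [abs_mul, abs_mul, abs_of_nonneg hc, abs_of_nonneg hm', abs_sub_comm]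
      exact mul_le_of_le_one_left (by positivity) (by linarith)
    have hthird : |cout * (m' - m)| = cout * |m - m'| := by
      rw [abs_mul, abs_of_nonneg hcout, abs_sub_comm]
    rw [hsplit]
    refine (abs_add_three _ _ _).trans ?_
    nlinarith [mul_nonneg hcin (abs_nonneg (m - m'))]
  · simp only [scodPointLoss, if_true]
    rw [← mul_sub, abs_mul, abs_of_nonneg hcin]
    calc cin * |m - m'| ≤ |m - m'| := mul_le_of_le_one_left (abs_nonneg _) (by linarith)
      _ ≤ |m - m'| + m' * |p y - p' y| := le_add_of_nonneg_right (by positivity)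

theorem rejection_rule_iff_scaled {k a s S : ℝ} (hs : 0 < s) (hS : 0 < S) :
    k * (1 - a) + cout / s > cin ↔
      cin * (s / (1 + s) * S)
        < k * (s / (1 + s) * S * (1 - a)) + cout * (S - s / (1 + s) * S) := by
  have hT : 0 < s / (1 + s) * S := by positivity
  have hscale : (k * (1 - a) + cout / s) * (s / (1 + s) * S)
      = k * (s / (1 + s) * S * (1 - a)) + cout * (S - s / (1 + s) * S) := by
    field_simp
    ring
  rw [gt_iff_lt, ← mul_lt_mul_iff_of_pos_right hT, hscale]

theorem scodPointLoss_plugin_sub_le {μx νx s : ℝ} {η ηhat : Fin L → ℝ} {yh : Fin L} {b : Bool}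
    (hη0 : ∀ y, 0 ≤ η y) (hη1 : ∑ y, η y = 1)
    (hcin : 0 ≤ cin) (hcout : 0 ≤ cout) (hsum : cin + cout ≤ 1)
    (hS : 0 < μx + νx) (hs : 0 < s) (hyh : ∀ y, ηhat y ≤ ηhat yh)
    (hb : b = true ↔ (1 - cin - cout) * (1 - ⨆ y, ηhat y) + cout / s > cin)
    (y : Fin L) (b' : Bool) :
    scodPointLoss cin cout μx νx η yh b - scodPointLoss cin cout μx νx η y b'
      ≤ 4 * ((μx + νx) / 2 * ((∑ y, |η y - ηhat y|) + |μx / (μx + νx) - s / (1 + s)|)) := by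
  set S := μx + νx
  set m' := s / (1 + s) * S
  have hm'0 : 0 < m' := by positivity
  have hm'S : m' ≤ S := mul_le_of_le_one_left hS.le ((div_le_one (by positivity)).2 (by linarith))
  have hsup : ⨆ y, ηhat y = ηhat yh :=
    have : Nonempty (Fin L) := ⟨yh⟩
    le_antisymm (ciSup_le hyh) (le_ciSup (Finite.bddAbove_range _) yh)
  have hmin := scodPointLoss_le_of_plugin (n := S - m') (show 0 ≤ 1 - cin - cout by linarith)
    hm'0.le hyh (hb.trans (by rw [hsup]; exact rejection_rule_iff_scaled hs hS))
  have hmass : |μx - m'| = S * |μx / S - s / (1 + s)| := by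
    have : μx - m' = S * (μx / S - s / (1 + s)) := by
      simp only [m']
      field_simp
    rw [this, abs_mul, abs_of_pos hS]
  have hclose : ∀ k : Fin L × Bool,
      |scodPointLoss cin cout μx νx η k.1 k.2 - scodPointLoss cin cout m' (S - m') ηhat k.1 k.2|
        ≤ S * (|μx / S - s / (1 + s)| + ∑ y, |η y - ηhat y|) := by
    intro k
    have hηle : η k.1 ≤ 1 := hη1 ▸ single_le_sum (fun y _ => hη0 y) (mem_univ k.1)
    have hdiff : |η k.1 - ηhat k.1| ≤ ∑ y, |η y - ηhat y| :=
      single_le_sum (f := fun y => |η y - ηhat y|) (fun y _ => abs_nonneg _) (mem_univ k.1)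
    refine (abs_scodPointLoss_sub_le hcin hcout hsum (hη0 _) hηle hm'0.le (by ring) k.2).trans ?_
    rw [hmass, mul_add]
    gcongr
  have := sub_le_two_mul_of_isMin_of_abs_sub_le hclose (i := (yh, b)) (fun k => hmin k.1 k.2)
    (y, b')
  linarith

end PointLoss

theorem scod_blackbox_plugin_regret_general
    {X : Type*} [Fintype X] {L : ℕ}
    (μ : X → ℝ)
    (η : X → Fin L → ℝ) (hη0 : ∀ x y, 0 ≤ η x y) (hη1 : ∀ x, ∑ y, η x y = 1)
    (ν : X → ℝ)
    (cin cout : ℝ) (hcin0 : 0 ≤ cin)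
    (hcout0 : 0 ≤ cout) (hsum : cin + cout ≤ 1)
    (hpos : ∀ x, 0 < μ x + ν x)
    (ηhat : X → Fin L → ℝ)
    (shat : X → ℝ) (hshat : ∀ x, 0 < shat x)
    (hhat : X → Fin L) (hhhat : ∀ x y, ηhat x y ≤ ηhat x (hhat x))
    (rhat : X → Bool)
    (hrhat : ∀ x, rhat x = true ↔
      (1 - cin - cout) * (1 - ⨆ y, ηhat x y) + cout / shat x > cin) :
    Lscod μ η ν cin cout hhat rhat
        - (⨅ p : (X → Fin L) × (X → Bool), Lscod μ η ν cin cout p.1 p.2)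
    ≤ 4 * ∑ x, ((μ x + ν x) / 2) *
        ((∑ y, |η x y - ηhat x y|)
          + |μ x / (μ x + ν x) - shat x / (1 + shat x)|) := by
  have : Nonempty ((X → Fin L) × (X → Bool)) := ⟨(hhat, rhat)⟩
  rw [sub_le_comm]
  refine le_ciInf fun p => ?_
  rw [sub_le_comm, Lscod_eq_sum_scodPointLoss, Lscod_eq_sum_scodPointLoss, ← sum_sub_distrib,
    mul_sum]
  exact sum_le_sum fun x _ => scodPointLoss_plugin_sub_le (hη0 x) (hη1 x) hcin0 hcout0 hsum
    (hpos x) (hshat x) (hhhat x) (hrhat x) (p.1 x) (p.2 x)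

/-- Lemma 4.1, regret bound for the black-box plug-in rejector:
with `γ(x) = μ(x)/(μ(x)+ν(x))` and `P*(x) = (μ(x)+ν(x))/2`, if `ĥ` is a plug-in
argmax classifier for estimates `η̂` and `r̂` rejects iff
`(1 − c_in − c_out)·(1 − max_y η̂(x)(y)) + c_out/ŝ(x) > c_in`, then the SCOD regret of
`(ĥ, r̂)` is at most
`4·Σ_x P*(x)·(Σ_y |η(x)(y) − η̂(x)(y)| + |γ(x) − ŝ(x)/(1+ŝ(x))|)`. -/
theorem scod_blackbox_plugin_regret
    {X : Type*} [Fintype X] [Nonempty X] {L : ℕ} (hL : 2 ≤ L)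
    (μ : X → ℝ) (hμ0 : ∀ x, 0 ≤ μ x) (hμ1 : ∑ x, μ x = 1)
    (η : X → Fin L → ℝ) (hη0 : ∀ x y, 0 ≤ η x y) (hη1 : ∀ x, ∑ y, η x y = 1)
    (ν : X → ℝ) (hν0 : ∀ x, 0 ≤ ν x) (hν1 : ∑ x, ν x = 1)
    (cin cout : ℝ) (hcin0 : 0 ≤ cin) (hcin1 : cin ≤ 1)
    (hcout0 : 0 ≤ cout) (hcout1 : cout ≤ 1) (hsum : cin + cout ≤ 1)
    (hpos : ∀ x, 0 < μ x + ν x)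
    (ηhat : X → Fin L → ℝ) (hηhat0 : ∀ x y, 0 ≤ ηhat x y)
    (hηhat1 : ∀ x, ∑ y, ηhat x y = 1)
    (shat : X → ℝ) (hshat : ∀ x, 0 < shat x)
    (hhat : X → Fin L) (hhhat : ∀ x y, ηhat x y ≤ ηhat x (hhat x))
    (rhat : X → Bool)
    (hrhat : ∀ x, rhat x = true ↔
      (1 - cin - cout) * (1 - ⨆ y, ηhat x y) + cout / shat x > cin) :
    Lscod μ η ν cin cout hhat rhat
        - (⨅ p : (X → Fin L) × (X → Bool), Lscod μ η ν cin cout p.1 p.2)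
    ≤ 4 * ∑ x, ((μ x + ν x) / 2) *
        ((∑ y, |η x y - ηhat x y|)
          + |μ x / (μ x + ν x) - shat x / (1 + shat x)|) :=
  scod_blackbox_plugin_regret_general μ η hη0 hη1 ν cin cout hcin0 hcout0 hsum hpos ηhat shat hshat
    hhat hhhat rhat hrhat
end

section
/- Let c_in, c_out ∈ [0,1] with c_in + c_out ≤ 1, and let γ, γ̂, M, M̂ ∈ [0,1]. Define the conditional rejection risks a₀ = (1 − c_in − c_out)·γ·(1 − M) + c_out·(1 − γ) (for accepting) and a₁ = c_in·γ (for rejecting), and define estimated risks â₀ = (1 − c_in − c_out)·γ̂·(1 − M̂) + c_out·(1 − γ̂) and â₁ = c_in·γ̂. Let r̂ ∈ {0,1} satisfy â_{r̂} = min(â₀, â₁). Then a_{r̂} − min(a₀, a₁) ≤ 2·(|γ − γ̂| + |M − M̂|). -/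
/-- pointwise excess rejection risk of the plug-in rejection
decision. With conditional rejection risks
`a₀ = (1 − c_in − c_out)·γ·(1 − M) + c_out·(1 − γ)` (accept) and `a₁ = c_in·γ`
(reject), and estimated risks `â₀, â₁` built from estimates `γ̂, M̂`, if the decision
`r̂ ∈ {0,1}` minimizes the estimated risk, then
`a_{r̂} − min(a₀, a₁) ≤ 2·(|γ − γ̂| + |M − M̂|)`. -/
theorem plugin_rejector_pointwise_regret
    (cin cout : ℝ) (hcin0 : 0 ≤ cin) (hcin1 : cin ≤ 1)
    (hcout0 : 0 ≤ cout) (hcout1 : cout ≤ 1) (hsum : cin + cout ≤ 1)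
    (γ γhat M Mhat : ℝ)
    (hγ0 : 0 ≤ γ) (hγ1 : γ ≤ 1) (hγhat0 : 0 ≤ γhat) (hγhat1 : γhat ≤ 1)
    (hM0 : 0 ≤ M) (hM1 : M ≤ 1) (hMhat0 : 0 ≤ Mhat) (hMhat1 : Mhat ≤ 1)
    (rhat : Bool)
    (hrhat : (if rhat = true then cin * γhat
              else (1 - cin - cout) * γhat * (1 - Mhat) + cout * (1 - γhat))
      = min ((1 - cin - cout) * γhat * (1 - Mhat) + cout * (1 - γhat))
            (cin * γhat)) :
    (if rhat = true then cin * γ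
     else (1 - cin - cout) * γ * (1 - M) + cout * (1 - γ))
      - min ((1 - cin - cout) * γ * (1 - M) + cout * (1 - γ)) (cin * γ)
    ≤ 2 * (|γ - γhat| + |M - Mhat|) := by
  have e1a : γ - γhat ≤ |γ - γhat| := le_abs_self _
  have e1b : -(|γ - γhat|) ≤ γ - γhat := neg_abs_le _
  have e2a : M - Mhat ≤ |M - Mhat| := le_abs_self _
  have e2b : -(|M - Mhat|) ≤ M - Mhat := neg_abs_le _
  have he1 : 0 ≤ |γ - γhat| := abs_nonneg _
  have he2 : 0 ≤ |M - Mhat| := abs_nonneg _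
  have hs : (0:ℝ) ≤ 1 - cin - cout := by linarith
  have h1M : (0:ℝ) ≤ 1 - M := by linarith
  have hA := mul_nonneg (mul_nonneg hs h1M) (by linarith : (0:ℝ) ≤ γ - γhat + |γ - γhat|)
  have hA' := mul_nonneg (mul_nonneg hs h1M) (by linarith : (0:ℝ) ≤ |γ - γhat| - (γ - γhat))
  have hB := mul_nonneg (mul_nonneg hs hγhat0) (by linarith : (0:ℝ) ≤ |M - Mhat| - (M - Mhat))
  have hB' := mul_nonneg (mul_nonneg hs hγhat0) (by linarith : (0:ℝ) ≤ |M - Mhat| + (M - Mhat))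
  have hC := mul_nonneg hcout0 (by linarith : (0:ℝ) ≤ γhat - γ + |γ - γhat|)
  have hC' := mul_nonneg hcout0 (by linarith : (0:ℝ) ≤ |γ - γhat| - (γhat - γ))
  have hD := mul_nonneg hcin0 (by linarith : (0:ℝ) ≤ |γ - γhat| - (γ - γhat))
  have hD' := mul_nonneg hcin0 (by linarith : (0:ℝ) ≤ |γ - γhat| + (γ - γhat))
  have hE := mul_nonneg (mul_nonneg hs he1) hM0
  have hF := mul_nonneg he2 (by nlinarith : (0:ℝ) ≤ 1 - (1 - cin - cout) * γhat)
  cases rhat with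
  | true =>
    simp only [if_true] at hrhat ⊢
    have hmin : cin * γhat ≤ (1 - cin - cout) * γhat * (1 - Mhat) + cout * (1 - γhat) := by
      rw [hrhat]; exact min_le_left _ _
    rcases le_total ((1 - cin - cout) * γ * (1 - M) + cout * (1 - γ)) (cin * γ) with hc | hc
    · rw [min_eq_left hc]; linarith
    · rw [min_eq_right hc]; linarith
  | false =>
    simp only [Bool.false_eq_true, if_false] at hrhat ⊢
    have hmin : (1 - cin - cout) * γhat * (1 - Mhat) + cout * (1 - γhat) ≤ cin * γhat := by
      rw [hrhat]; exact min_le_right _ _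
    rcases le_total ((1 - cin - cout) * γ * (1 - M) + cout * (1 - γ)) (cin * γ) with hc | hc
    · rw [min_eq_left hc]; linarith
    · rw [min_eq_right hc]; linarith
end

section
/- Let X be a nonempty finite type, μ : X → ℝ≥0 with Σ_x μ(x) = 1, let η : X → Fin L → ℝ≥0 satisfy Σ_y η(x)(y) = 1 for all x, and let p : X → Fin L → ℝ be such that p(x)(y) > 0 and Σ_y p(x)(y) = 1 for all x. Define the population cross-entropy risk R(p) = Σ_x μ(x)·Σ_y η(x)(y)·(−log p(x)(y)), and R_min = Σ_x μ(x)·Σ_y η(x)(y)·(−log η(x)(y)) (with the convention 0·log 0 = 0). Then Σ_x μ(x)·Σ_y |p(x)(y) − η(x)(y)| ≤ √2·√(R(p) − R_min). -/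
/-!
For each `x`, Pinsker's inequality bounds `(∑ y, |p x y - η x y|) ^ 2` by twice the
Kullback–Leibler divergence of `η x` from `p x`; Jensen's inequality for the square then bounds
the squared expected L1 error by twice the expected divergence, which is exactly `R(p) - R_min`.
Pinsker's inequality itself comes from the elementary bound
`klFun t ≥ 3 (t - 1) ^ 2 / (2 (t + 2))` at `t = a / b`, combined with Cauchy–Schwarz against the
weights `2 (a + 2 b) / 3`, which sum to `2`.
-/

open Real Finset InformationTheory

lemma monotoneOn_add_one_mul_log_sub_two_mul :
    MonotoneOn (fun t => (t + 1) * log t - 2 * (t - 1)) (Set.Ioi 0) := by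
  have hderiv (t : ℝ) (ht : 0 < t) :
      HasDerivAt (fun t => (t + 1) * log t - 2 * (t - 1)) (log t + t⁻¹ - 1) t := by
    refine ((((hasDerivAt_id t).add_const 1).mul (hasDerivAt_log ht.ne')).sub
      (((hasDerivAt_id t).sub_const 1).const_mul 2)).congr_deriv ?_
    simp only [id]
    field_simp
    ring
  refine monotoneOn_of_hasDerivWithinAt_nonneg (f' := fun t => log t + t⁻¹ - 1) (convex_Ioi 0)
    (fun t ht => (hderiv t ht).continuousAt.continuousWithinAt) (fun t ht => ?_) (fun t ht => ?_)
  all_goals rw [interior_Ioi] at *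
  · exact (hderiv t ht).hasDerivWithinAt
  · linarith [one_sub_inv_le_log_of_pos ht]

lemma isMinOn_Ioi_of_hasDerivAt_of_sub_mul_nonneg {f f' : ℝ → ℝ} {c a : ℝ} (hca : c < a)
    (hf : ∀ t, c < t → HasDerivAt f (f' t) t) (hsign : ∀ t, c < t → 0 ≤ (t - a) * f' t) :
    IsMinOn f (Set.Ioi c) a := by
  intro t ht
  rcases le_total t a with hta | hat
  · refine antitoneOn_of_hasDerivWithinAt_nonpos (f' := f') (convex_Ioc c a)
      (fun s hs => (hf s hs.1).continuousAt.continuousWithinAt)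
      (fun s hs => ?_) (fun s hs => ?_) ⟨ht, hta⟩ ⟨hca, le_rfl⟩ hta
    all_goals rw [interior_Ioc] at hs
    · exact (hf s hs.1).hasDerivWithinAt
    · nlinarith [hsign s hs.1, hs.2]
  · refine monotoneOn_of_hasDerivWithinAt_nonneg (f' := f') (convex_Ici a)
      (fun s hs => (hf s (hca.trans_le hs)).continuousAt.continuousWithinAt)
      (fun s hs => ?_) (fun s hs => ?_) Set.self_mem_Ici hat hat
    all_goals rw [interior_Ici] at hs
    · exact (hf s (hca.trans hs)).hasDerivWithinAt
    · nlinarith [hsign s (hca.trans hs), Set.mem_Ioi.1 hs]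

lemma three_mul_sub_one_sq_le_mul_klFun {t : ℝ} (ht : 0 ≤ t) :
    3 * (t - 1) ^ 2 ≤ 2 * (t + 2) * klFun t := by
  rcases ht.eq_or_lt with rfl | ht
  · norm_num [klFun_zero]
  set χ : ℝ → ℝ := fun t => (t + 1) * log t - 2 * (t - 1)
  have hderiv (s : ℝ) (hs : 0 < s) :
      HasDerivAt (fun t => 2 * (t + 2) * klFun t - 3 * (t - 1) ^ 2) (4 * χ s) s := by
    refine ((((hasDerivAt_id s).add_const 2).const_mul 2).mul (hasDerivAt_klFun hs.ne')).sub
      ((((hasDerivAt_id s).sub_const 1).pow 2).const_mul 3) |>.congr_deriv ?_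
    simp only [id, χ, klFun_apply]
    ring
  have hsign (s : ℝ) (hs : 0 < s) : 0 ≤ (s - 1) * (4 * χ s) := by
    have hχ1 : χ 1 = 0 := by simp [χ]
    rcases le_total s 1 with hs1 | hs1
    · have := monotoneOn_add_one_mul_log_sub_two_mul hs (Set.mem_Ioi.2 one_pos) hs1
      nlinarith
    · have := monotoneOn_add_one_mul_log_sub_two_mul (Set.mem_Ioi.2 one_pos)
        (one_pos.trans_le hs1) hs1
      nlinarith
  have hmin := isMinOn_Ioi_of_hasDerivAt_of_sub_mul_nonneg one_pos hderiv hsign ht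
  simp only [Set.mem_ofPred_eq, klFun_one] at hmin
  linarith

lemma three_mul_sub_sq_le_mul_log_sub {a b : ℝ} (ha : 0 ≤ a) (hb : 0 < b) :
    3 * (a - b) ^ 2 ≤ 2 * (a + 2 * b) * (a * log a - a * log b - a + b) := by
  rcases ha.eq_or_lt with rfl | ha
  · nlinarith
  have h := three_mul_sub_one_sq_le_mul_klFun (div_pos ha hb).le
  rw [klFun_apply, log_div ha.ne' hb.ne'] at h
  have hb2 : 0 < b ^ 2 := by positivity
  calc 3 * (a - b) ^ 2 = b ^ 2 * (3 * (a / b - 1) ^ 2) := by field_simp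
    _ ≤ b ^ 2 * (2 * (a / b + 2) * (a / b * (log a - log b) + 1 - a / b)) := by gcongr
    _ = 2 * (a + 2 * b) * (a * log a - a * log b - a + b) := by field_simp; ring

lemma sq_sum_abs_sub_le_two_mul_sum_mul_log_sub {ι : Type*} [Fintype ι] {a b : ι → ℝ}
    (ha : ∀ i, 0 ≤ a i) (hb : ∀ i, 0 < b i) (ha1 : ∑ i, a i = 1) (hb1 : ∑ i, b i = 1) :
    (∑ i, |a i - b i|) ^ 2 ≤ 2 * ∑ i, (a i * log (a i) - a i * log (b i)) := by
  set d : ι → ℝ := fun i => a i * log (a i) - a i * log (b i) - a i + b i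
  have hd (i : ι) : 3 * (a i - b i) ^ 2 ≤ 2 * (a i + 2 * b i) * d i :=
    three_mul_sub_sq_le_mul_log_sub (ha i) (hb i)
  have hd0 (i : ι) : 0 ≤ d i := by
    have := hb i
    nlinarith [hd i, ha i, sq_nonneg (a i - b i)]
  have hcs := sum_sq_le_sum_mul_sum_of_sq_le_mul univ (r := fun i => |a i - b i|)
    (f := d) (g := fun i => 2 * (a i + 2 * b i) / 3) (fun i _ => hd0 i)
    (fun i _ => by have := ha i; have := hb i; positivity)
    (fun i _ => by rw [sq_abs]; linarith [hd i])
  have hdsum : ∑ i, d i = ∑ i, (a i * log (a i) - a i * log (b i)) := by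
    simp only [d, sum_add_distrib, sum_sub_distrib, ha1, hb1]
    ring
  have hwsum : ∑ i, 2 * (a i + 2 * b i) / 3 = 2 := by
    simp only [← sum_div, ← mul_sum, sum_add_distrib, ha1, hb1]
    norm_num
  rwa [hdsum, hwsum, mul_comm] at hcs

theorem multiclass_cross_entropy_regret_bound_general
    {X : Type*} [Fintype X] {L : ℕ}
    (μ : X → ℝ) (hμ0 : ∀ x, 0 ≤ μ x) (hμ1 : ∑ x, μ x = 1)
    (η : X → Fin L → ℝ) (hη0 : ∀ x y, 0 ≤ η x y) (hη1 : ∀ x, ∑ y, η x y = 1)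
    (p : X → Fin L → ℝ) (hp0 : ∀ x y, 0 < p x y) (hp1 : ∀ x, ∑ y, p x y = 1) :
    ∑ x, μ x * ∑ y, |p x y - η x y|
      ≤ Real.sqrt 2 * Real.sqrt
          ((∑ x, μ x * ∑ y, η x y * (-Real.log (p x y)))
            - ∑ x, μ x * ∑ y, η x y * (-Real.log (η x y))) := by
  set kl : X → ℝ := fun x => ∑ y, (η x y * log (η x y) - η x y * log (p x y))
  have hregret : (∑ x, μ x * ∑ y, η x y * (-log (p x y)))
      - ∑ x, μ x * ∑ y, η x y * (-log (η x y)) = ∑ x, μ x * kl x := by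
    simp only [kl, ← sum_sub_distrib, ← mul_sub]
    congr! 3
    ring
  have hpinsker (x : X) : (∑ y, |p x y - η x y|) ^ 2 ≤ 2 * kl x := by
    simpa only [abs_sub_comm] using
      sq_sum_abs_sub_le_two_mul_sum_mul_log_sub (hη0 x) (hp0 x) (hη1 x) (hp1 x)
  have hjensen := (convexOn_pow 2).map_sum_le (t := univ) (fun x _ => hμ0 x) hμ1
    (p := fun x => ∑ y, |p x y - η x y|)
    (fun x _ => Set.mem_Ici.2 (sum_nonneg fun y _ => abs_nonneg _))
  simp only [smul_eq_mul] at hjensen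
  rw [hregret, ← sqrt_mul zero_le_two]
  refine le_sqrt_of_sq_le (hjensen.trans ?_)
  rw [mul_sum]
  exact sum_le_sum fun x _ => by nlinarith [hpinsker x, hμ0 x]

/-- Lemma 4.2, multiclass regret bound: for the population
cross-entropy risk `R(p) = Σ_x μ(x)·Σ_y η(x)(y)·(−log p(x)(y))` and its minimum
`R_min = Σ_x μ(x)·Σ_y η(x)(y)·(−log η(x)(y))` (with `0·log 0 = 0`, which holds
automatically since `Real.log 0 = 0`), the expected L1 estimation error satisfies
`Σ_x μ(x)·Σ_y |p(x)(y) − η(x)(y)| ≤ √2·√(R(p) − R_min)`. -/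
theorem multiclass_cross_entropy_regret_bound
    {X : Type*} [Fintype X] [Nonempty X] {L : ℕ}
    (μ : X → ℝ) (hμ0 : ∀ x, 0 ≤ μ x) (hμ1 : ∑ x, μ x = 1)
    (η : X → Fin L → ℝ) (hη0 : ∀ x y, 0 ≤ η x y) (hη1 : ∀ x, ∑ y, η x y = 1)
    (p : X → Fin L → ℝ) (hp0 : ∀ x y, 0 < p x y) (hp1 : ∀ x, ∑ y, p x y = 1) :
    ∑ x, μ x * ∑ y, |p x y - η x y|
      ≤ Real.sqrt 2 * Real.sqrt
          ((∑ x, μ x * ∑ y, η x y * (-Real.log (p x y)))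
            - ∑ x, μ x * ∑ y, η x y * (-Real.log (η x y))) :=
  multiclass_cross_entropy_regret_bound_general μ hμ0 hμ1 η hη0 hη1 p hp0 hp1
end

section
/- Let X be a nonempty finite type, P* : X → ℝ≥0 with Σ_x P*(x) = 1, let γ : X → [0,1], and let p : X → ℝ satisfy 0 < p(x) < 1 for all x. Define the population binary cross-entropy risk R(p) = Σ_x P*(x)·( γ(x)·(−log p(x)) + (1 − γ(x))·(−log(1 − p(x))) ), and R_min = Σ_x P*(x)·( γ(x)·(−log γ(x)) + (1 − γ(x))·(−log(1 − γ(x))) ) (with the convention 0·log 0 = 0). Then Σ_x P*(x)·|p(x) − γ(x)| ≤ (1/√2)·√(R(p) − R_min). -/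
/-!
Binary Pinsker inequality pointwise, then Cauchy–Schwarz. For fixed `a ∈ [0,1]`, the function
`t ↦ CE(a, t) - 2 (t - a)²` has derivative `(t - a)(1 - 2t)² / (t(1 - t))` on `(0, 1)`, so it is
minimised at `t = a`; this gives `2 (p - γ)² ≤ CE(γ, p) - CE(γ, γ)` at every point. Averaging
against `P*` and using `(𝔼|p - γ|)² ≤ 𝔼 (p - γ)²` yields the bound.
-/

open Finset Real Set

/-- The cross-entropy of a Bernoulli(`t`) prediction against a Bernoulli(`a`) target. -/
noncomputable def binaryCrossEntropy (a t : ℝ) : ℝ :=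
  a * -log t + (1 - a) * -log (1 - t)

lemma le_of_hasDerivAt_of_sub_mul_nonneg {f f' : ℝ → ℝ} {a b : ℝ}
    (hf : ContinuousOn f (uIcc a b))
    (hf' : ∀ t ∈ Ioo (min a b) (max a b), HasDerivAt f (f' t) t)
    (hsign : ∀ t ∈ Ioo (min a b) (max a b), 0 ≤ (t - a) * f' t) :
    f a ≤ f b := by
  rcases le_total a b with hab | hba
  · rw [uIcc_of_le hab] at hf
    rw [min_eq_left hab, max_eq_right hab] at hf' hsign
    refine monotoneOn_of_hasDerivWithinAt_nonneg (f' := f') (convex_Icc a b) hf ?_ ?_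
      (left_mem_Icc.2 hab) (right_mem_Icc.2 hab) hab <;> rw [interior_Icc]
    · exact fun t ht => (hf' t ht).hasDerivWithinAt
    · exact fun t ht => nonneg_of_mul_nonneg_right (hsign t ht) (sub_pos.2 ht.1)
  · rw [uIcc_of_ge hba] at hf
    rw [min_eq_right hba, max_eq_left hba] at hf' hsign
    refine antitoneOn_of_hasDerivWithinAt_nonpos (f' := f') (convex_Icc b a) hf ?_ ?_
      (left_mem_Icc.2 hba) (right_mem_Icc.2 hba) hba <;> rw [interior_Icc]
    · exact fun t ht => (hf' t ht).hasDerivWithinAt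
    · exact fun t ht => nonpos_of_mul_nonneg_right (hsign t ht) (sub_neg.2 ht.2)

lemma continuousOn_const_mul_log {a : ℝ} {s : Set ℝ} (h : a ≠ 0 → ∀ t ∈ s, t ≠ 0) :
    ContinuousOn (fun t => a * log t) s := by
  by_cases ha : a = 0
  · simpa [ha] using continuousOn_const
  · exact continuousOn_const.mul (continuousOn_log.mono fun t ht => h ha t ht)

lemma continuousOn_binaryCrossEntropy {a : ℝ} {s : Set ℝ}
    (h₀ : a ≠ 0 → ∀ t ∈ s, t ≠ 0) (h₁ : a ≠ 1 → ∀ t ∈ s, t ≠ 1) :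
    ContinuousOn (binaryCrossEntropy a) s := by
  have hlog₁ : ContinuousOn (fun t => (1 - a) * log (1 - t)) s :=
    (continuousOn_const_mul_log (s := (1 - ·) '' s) fun ha t ⟨u, hu, hut⟩ =>
      hut ▸ sub_ne_zero.2 (h₁ (fun h => ha (by rw [h, sub_self])) u hu).symm).comp
      (continuousOn_const.sub continuousOn_id) (mapsTo_image _ s)
  have hbce : binaryCrossEntropy a = fun t => -(a * log t + (1 - a) * log (1 - t)) := by
    funext t; simp only [binaryCrossEntropy]; ring
  exact hbce ▸ ((continuousOn_const_mul_log h₀).add hlog₁).neg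

lemma hasDerivAt_binaryCrossEntropy (a : ℝ) {t : ℝ} (ht₀ : 0 < t) (ht₁ : t < 1) :
    HasDerivAt (binaryCrossEntropy a) ((t - a) / (t * (1 - t))) t := by
  have hlog : HasDerivAt (fun t => log t) t⁻¹ t := hasDerivAt_log ht₀.ne'
  have hlog₁ : HasDerivAt (fun t => log (1 - t)) (-1 / (1 - t)) t :=
    ((hasDerivAt_id t).const_sub 1).log (sub_ne_zero.2 ht₁.ne')
  refine ((hlog.neg.const_mul a).add (hlog₁.neg.const_mul (1 - a))).congr_deriv ?_
  field_simp [ht₀.ne', (sub_pos.2 ht₁).ne']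
  ring

/-- Binary Pinsker inequality: `2 (b - a)² ≤ KL(Ber a ‖ Ber b)`. -/
lemma two_mul_sq_sub_le_binaryCrossEntropy_sub {a b : ℝ} (ha₀ : 0 ≤ a) (ha₁ : a ≤ 1)
    (hb₀ : 0 < b) (hb₁ : b < 1) :
    2 * (b - a) ^ 2 ≤ binaryCrossEntropy a b - binaryCrossEntropy a a := by
  have hIoo : ∀ t ∈ Ioo (min a b) (max a b), 0 < t ∧ t < 1 := fun t ht =>
    ⟨(le_min ha₀ hb₀.le).trans_lt ht.1, ht.2.trans_le (max_le ha₁ hb₁.le)⟩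
  have hcont : ContinuousOn (binaryCrossEntropy a) (uIcc a b) := by
    refine continuousOn_binaryCrossEntropy (fun ha t ht => ?_) (fun ha t ht => ?_)
    · exact ((lt_min (ha₀.lt_of_ne' ha) hb₀).trans_le ht.1).ne'
    · exact (ht.2.trans_lt (max_lt (ha₁.lt_of_ne ha) hb₁)).ne
  suffices h : binaryCrossEntropy a a - 2 * (a - a) ^ 2
      ≤ binaryCrossEntropy a b - 2 * (b - a) ^ 2 by
    linarith [sub_self a ▸ h]
  refine le_of_hasDerivAt_of_sub_mul_nonneg
    (f := fun t => binaryCrossEntropy a t - 2 * (t - a) ^ 2)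
    (f' := fun t => (t - a) * (1 - 2 * t) ^ 2 / (t * (1 - t)))
    (hcont.sub (by fun_prop)) (fun t ht => ?_) (fun t ht => ?_)
  all_goals obtain ⟨ht₀, ht₁⟩ := hIoo t ht
  · have hsq : HasDerivAt (fun t => 2 * (t - a) ^ 2) (2 * (2 * (t - a))) t := by
      simpa using (((hasDerivAt_id t).sub_const a).pow 2).const_mul 2
    refine ((hasDerivAt_binaryCrossEntropy a ht₀ ht₁).sub hsq).congr_deriv ?_
    field_simp [ht₀.ne', (sub_pos.2 ht₁).ne']
    ring
  · rw [← mul_div_assoc, ← mul_assoc]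
    exact div_nonneg (mul_nonneg (mul_self_nonneg _) (sq_nonneg _))
      (mul_pos ht₀ (sub_pos.2 ht₁)).le

lemma sq_sum_mul_abs_le_sum_mul_sq {ι : Type*} (s : Finset ι) {w d : ι → ℝ}
    (hw₀ : ∀ i ∈ s, 0 ≤ w i) (hw₁ : ∑ i ∈ s, w i = 1) :
    (∑ i ∈ s, w i * |d i|) ^ 2 ≤ ∑ i ∈ s, w i * d i ^ 2 := by
  simpa [hw₁] using sum_sq_le_sum_mul_sum_of_sq_le_mul s hw₀
    (fun i hi => mul_nonneg (hw₀ i hi) (sq_nonneg (d i)))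
    (fun i _ => le_of_eq (by rw [mul_pow, sq_abs, ← mul_assoc, sq]))

lemma le_one_div_sqrt_two_mul_sqrt {s d : ℝ} (hs : 0 ≤ s) (h : 2 * s ^ 2 ≤ d) :
    s ≤ 1 / √2 * √d := by
  calc s = √(s ^ 2) := (sqrt_sq hs).symm
    _ ≤ √(d / 2) := sqrt_le_sqrt (by linarith)
    _ = 1 / √2 * √d := by rw [sqrt_div' d zero_le_two]; ring

theorem binary_cross_entropy_regret_bound_general
    {X : Type*} [Fintype X]
    (Pstar : X → ℝ) (hP0 : ∀ x, 0 ≤ Pstar x) (hP1 : ∑ x, Pstar x = 1)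
    (γ : X → ℝ) (hγ0 : ∀ x, 0 ≤ γ x) (hγ1 : ∀ x, γ x ≤ 1)
    (p : X → ℝ) (hp0 : ∀ x, 0 < p x) (hp1 : ∀ x, p x < 1) :
    ∑ x, Pstar x * |p x - γ x|
      ≤ (1 / Real.sqrt 2) * Real.sqrt
          ((∑ x, Pstar x * (γ x * (-Real.log (p x))
              + (1 - γ x) * (-Real.log (1 - p x))))
            - ∑ x, Pstar x * (γ x * (-Real.log (γ x))
              + (1 - γ x) * (-Real.log (1 - γ x)))) := by
  refine le_one_div_sqrt_two_mul_sqrt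
    (sum_nonneg fun x _ => mul_nonneg (hP0 x) (abs_nonneg _)) ?_
  calc 2 * (∑ x, Pstar x * |p x - γ x|) ^ 2
      ≤ ∑ x, 2 * (Pstar x * (p x - γ x) ^ 2) := by
        rw [← mul_sum]
        gcongr
        exact sq_sum_mul_abs_le_sum_mul_sq univ (fun x _ => hP0 x) hP1
    _ ≤ ∑ x, (Pstar x * binaryCrossEntropy (γ x) (p x)
          - Pstar x * binaryCrossEntropy (γ x) (γ x)) := by
        gcongr with x
        rw [← mul_sub, mul_left_comm]
        exact mul_le_mul_of_nonneg_left
          (two_mul_sq_sub_le_binaryCrossEntropy_sub (hγ0 x) (hγ1 x) (hp0 x) (hp1 x)) (hP0 x)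
    _ = _ := sum_sub_distrib _ _

/-- Lemma 4.2, binary regret bound: for the population binary
cross-entropy risk `R(p) = Σ_x P*(x)·(γ(x)·(−log p(x)) + (1 − γ(x))·(−log(1 − p(x))))`
and its minimum `R_min = Σ_x P*(x)·(γ(x)·(−log γ(x)) + (1 − γ(x))·(−log(1 − γ(x))))`
(with `0·log 0 = 0`, automatic since `Real.log 0 = 0`), the expected estimation error
satisfies `Σ_x P*(x)·|p(x) − γ(x)| ≤ (1/√2)·√(R(p) − R_min)`. -/
theorem binary_cross_entropy_regret_bound
    {X : Type*} [Fintype X] [Nonempty X]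
    (Pstar : X → ℝ) (hP0 : ∀ x, 0 ≤ Pstar x) (hP1 : ∑ x, Pstar x = 1)
    (γ : X → ℝ) (hγ0 : ∀ x, 0 ≤ γ x) (hγ1 : ∀ x, γ x ≤ 1)
    (p : X → ℝ) (hp0 : ∀ x, 0 < p x) (hp1 : ∀ x, p x < 1) :
    ∑ x, Pstar x * |p x - γ x|
      ≤ (1 / Real.sqrt 2) * Real.sqrt
          ((∑ x, Pstar x * (γ x * (-Real.log (p x))
              + (1 - γ x) * (-Real.log (1 - p x))))
            - ∑ x, Pstar x * (γ x * (-Real.log (γ x))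
              + (1 - γ x) * (-Real.log (1 - γ x)))) :=
  binary_cross_entropy_regret_bound_general Pstar hP0 hP1 γ hγ0 hγ1 p hp0 hp1
end
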